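/- Let G be a group, let α be a U(1)-valued 2-cocycle on G, and let g₁, g₂, g₃ ∈ G satisfy g₁g₂g₃ = 1. Then for every h ∈ G commuting with g₁, g₂, and g₃, the product of the three twisted character values is trivial: γ(α)(g₁,h)·γ(α)(g₂,h)·γ(α)(g₃,h) = 1. -/
import Mathlib

lemma phase_mul_aux {G : Type*} [Group G] (α : G → G → Circle)
    (hc : ∀ g h k : G, α g (h * k) * α h k = α g h * α (g * h) k)
    (a b h : G) (ha : a * h = h * a) (hb : b * h = h * b) :
    α (a * b) h * (α h (a * b))⁻¹ = (α a h * (α h a)⁻¹) * (α b h * (α h b)⁻¹) := by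
  have e1 := hc a b h
  rw [hb] at e1
  have e2 := hc a h b
  rw [ha] at e2
  have e3 := hc h a b
  apply Subtype.ext
  have c1 := congrArg (fun x : Circle => (x : ℂ)) e1
  have c2 := congrArg (fun x : Circle => (x : ℂ)) e2
  have c3 := congrArg (fun x : Circle => (x : ℂ)) e3
  simp only [Circle.coe_mul, Circle.coe_inv] at *
  have hw : (α a b : ℂ) ≠ 0 := Circle.coe_ne_zero _
  field_simp
  apply mul_left_cancel₀ hw
  linear_combination (-(((α h a : ℂ)) * (α h b))) * c1 + ((α b h : ℂ) * (α h a)) * c2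
    + (-((α a h : ℂ) * (α b h))) * c3

/-- For a `U(1)`-valued 2-cocycle `α` on `G` and `g₁, g₂, g₃ ∈ G` with
`g₁g₂g₃ = 1`, every `h ∈ G` commuting with `g₁, g₂, g₃` satisfies
`γ(α)(g₁,h)·γ(α)(g₂,h)·γ(α)(g₃,h) = 1`. -/
theorem phase_triple_product_eq_one {G : Type*} [Group G] (α : G → G → Circle)
    (hα_one_right : ∀ g : G, α g 1 = 1) (hα_one_left : ∀ g : G, α 1 g = 1)
    (hα_cocycle : ∀ g h k : G, α g (h * k) * α h k = α g h * α (g * h) k) :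
    ∀ g₁ g₂ g₃ : G, g₁ * g₂ * g₃ = 1 →
      ∀ h : G, g₁ * h = h * g₁ → g₂ * h = h * g₂ → g₃ * h = h * g₃ →
        (α g₁ h * (α h g₁)⁻¹) * (α g₂ h * (α h g₂)⁻¹) * (α g₃ h * (α h g₃)⁻¹) = 1 := by
  intro g₁ g₂ g₃ hg h h1 h2 h3
  have h12 : (g₁ * g₂) * h = h * (g₁ * g₂) := by
    rw [mul_assoc, h2, ← mul_assoc, h1, mul_assoc]
  have key := phase_mul_aux α hα_cocycle g₁ g₂ h h1 h2
  have key2 := phase_mul_aux α hα_cocycle (g₁ * g₂) g₃ h h12 h3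
  rw [hg] at key2
  rw [← key, ← key2, hα_one_right, hα_one_left]
  simp
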